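/- Let 𝒩 be a tree-based network on X = {1,...,n} and let π be any permutation of X. Then there is a finite sequence of crossovers between terminal arcs of adjacent leaves (i.e., crossovers σ_{i,i+1} for various i) whose successive addition to 𝒩 yields a tree-based network 𝒩' on X with the property that, for every base tree 𝒯 of 𝒩, the tree obtained from 𝒯 by relabelling each leaf x as π(x) is a base tree of 𝒩'. -/

import Mathlib

/-- A finite directed graph with vertices drawn from ℕ. -/
structure Dgraph where
  verts : Finset ℕ
  arcs : Finset (ℕ × ℕ)

namespace Dgraph

/-- In-degree of a vertex. -/
def indeg (G : Dgraph) (v : ℕ) : ℕ := (G.arcs.filter fun a => a.2 = v).card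

/-- Out-degree of a vertex. -/
def outdeg (G : Dgraph) (v : ℕ) : ℕ := (G.arcs.filter fun a => a.1 = v).card

/-- The adjacency (arc) relation. -/
def ArcRel (G : Dgraph) : ℕ → ℕ → Prop := fun u v => (u, v) ∈ G.arcs

/-- A directed graph is acyclic if it has no directed cycle. -/
def Acyclic (G : Dgraph) : Prop :=
  ∀ u v : ℕ, G.ArcRel u v → ¬ Relation.ReflTransGen G.ArcRel v u

/-- All arcs join vertices of the graph. -/
def WellFormed (G : Dgraph) : Prop :=
  ∀ a ∈ G.arcs, a.1 ∈ G.verts ∧ a.2 ∈ G.verts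

/-- The leaf-label set X = {1, …, n}. -/
def leafSet (n : ℕ) : Finset ℕ := Finset.Icc 1 n

/-- A leaf: in-degree 1 and out-degree 0. -/
def IsLeaf (G : Dgraph) (v : ℕ) : Prop := v ∈ G.verts ∧ G.indeg v = 1 ∧ G.outdeg v = 0

/-- A root: a vertex of in-degree 0. -/
def IsRoot (G : Dgraph) (v : ℕ) : Prop := v ∈ G.verts ∧ G.indeg v = 0

/-- A rooted binary phylogenetic network on X = {1, …, n}: an acyclic digraph whose
leaves (in-degree 1, out-degree 0) are exactly X, with a unique root ρ of in-degree 0 and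
out-degree in {1,2}, all other vertices having degrees {indeg, outdeg} = {1, 2}. -/
def RBPN (n : ℕ) (G : Dgraph) : Prop :=
  G.WellFormed ∧ G.Acyclic ∧
  (∀ v : ℕ, G.IsLeaf v ↔ v ∈ leafSet n) ∧
  ∃ ρ ∈ G.verts, G.indeg ρ = 0 ∧ (G.outdeg ρ = 1 ∨ G.outdeg ρ = 2) ∧
    ∀ v ∈ G.verts, v ∉ leafSet n → v ≠ ρ →
      ((G.indeg v = 1 ∧ G.outdeg v = 2) ∨ (G.indeg v = 2 ∧ G.outdeg v = 1))

/-- A rooted binary phylogenetic tree on X = {1, …, n}: a rooted binary phylogenetic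
network with no vertex of in-degree 2. -/
def RBPT (n : ℕ) (G : Dgraph) : Prop :=
  RBPN n G ∧ ∀ v : ℕ, G.indeg v ≠ 2

/-- Inserting one new vertex into one arc. -/
def SubdivStep (G G' : Dgraph) : Prop :=
  ∃ u v w : ℕ, (u, v) ∈ G.arcs ∧ w ∉ G.verts ∧
    G' = ⟨insert w G.verts, insert (u, w) (insert (w, v) (G.arcs.erase (u, v)))⟩

/-- `G'` is a subdivision of `G`: obtained by inserting vertices into arcs zero or more times. -/
def Subdivision (G G' : Dgraph) : Prop := Relation.ReflTransGen SubdivStep G G'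

/-- Smoothing a single vertex of in-degree 1 and out-degree 1. -/
def SmoothStep (G G' : Dgraph) : Prop :=
  ∃ u v w : ℕ, G.indeg v = 1 ∧ G.outdeg v = 1 ∧ (u, v) ∈ G.arcs ∧ (v, w) ∈ G.arcs ∧
    G' = ⟨G.verts.erase v, insert (u, w) ((G.arcs.erase (u, v)).erase (v, w))⟩

/-- `G'` is the result of smoothing all vertices of in-degree 1 and out-degree 1 of `G`. -/
def Smoothed (G G' : Dgraph) : Prop :=
  Relation.ReflTransGen SmoothStep G G' ∧ ∀ v : ℕ, ¬ (G'.indeg v = 1 ∧ G'.outdeg v = 1)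

/-- `f` realises a digraph isomorphism from `G` onto `H`. -/
def IsIsoOn (f : ℕ → ℕ) (G H : Dgraph) : Prop :=
  Set.BijOn f ↑G.verts ↑H.verts ∧
  ∀ u ∈ G.verts, ∀ v ∈ G.verts, ((u, v) ∈ G.arcs ↔ (f u, f v) ∈ H.arcs)

/-- Isomorphism of (unlabelled) digraphs. -/
def Isomorphic (G H : Dgraph) : Prop := ∃ f : ℕ → ℕ, IsIsoOn f G H

/-- Isomorphism of digraphs fixing each leaf label in X = {1, …, n}. -/
def IsomorphicL (n : ℕ) (G H : Dgraph) : Prop :=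
  ∃ f : ℕ → ℕ, IsIsoOn f G H ∧ ∀ x ∈ leafSet n, f x = x

/-- Two digraphs are homeomorphic if they become isomorphic after smoothing all
vertices of in-degree 1 and out-degree 1. -/
def Homeomorphic (G H : Dgraph) : Prop :=
  ∃ G' H' : Dgraph, Smoothed G G' ∧ Smoothed H H' ∧ Isomorphic G' H'

/-- Label-preserving homeomorphism (the isomorphism after smoothing fixes the leaf labels). -/
def HomeomorphicL (n : ℕ) (G H : Dgraph) : Prop :=
  ∃ G' H' : Dgraph, Smoothed G G' ∧ Smoothed H H' ∧ IsomorphicL n G' H'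

/-- A set of mutually vertex-disjoint arcs. -/
def DisjointArcs (I : Finset (ℕ × ℕ)) : Prop :=
  ∀ a ∈ I, ∀ b ∈ I, a ≠ b → a.1 ≠ b.1 ∧ a.1 ≠ b.2 ∧ a.2 ≠ b.1 ∧ a.2 ≠ b.2

/-- `T` is a base tree of the network `N` on X = {1, …, n}: there are a subdivision
`T' = (V', A')` of `T` and a set `I` of mutually vertex-disjoint linking arcs between
attachment points (vertices of `V' \ V`) such that `(V', A' ∪ I)` is acyclic and
homeomorphic (preserving leaf labels) to `N`. -/
def IsBaseTree (n : ℕ) (N T : Dgraph) : Prop :=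
  ∃ T' : Dgraph, Subdivision T T' ∧
    ∃ I : Finset (ℕ × ℕ),
      (∀ a ∈ I, a.1 ∈ T'.verts ∧ a.1 ∉ T.verts ∧ a.2 ∈ T'.verts ∧ a.2 ∉ T.verts) ∧
      DisjointArcs I ∧
      Acyclic ⟨T'.verts, T'.arcs ∪ I⟩ ∧
      HomeomorphicL n ⟨T'.verts, T'.arcs ∪ I⟩ N

/-- A tree-based network on X = {1, …, n}: a rooted binary phylogenetic network having
some rooted binary phylogenetic tree on X as a base tree. -/
def TreeBased (n : ℕ) (N : Dgraph) : Prop :=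
  RBPN n N ∧ ∃ T : Dgraph, RBPT n T ∧ IsBaseTree n N T

/-- A tree-based network `N = (V, A)` on X is universal if for every rooted binary
phylogenetic tree `T` on X there is a set `I ⊆ A` of linking arcs such that
`(V, A \ I)` is homeomorphic (preserving leaf labels) to `T`. -/
def Universal (n : ℕ) (N : Dgraph) : Prop :=
  ∀ T : Dgraph, RBPT n T →
    ∃ I : Finset (ℕ × ℕ), I ⊆ N.arcs ∧ HomeomorphicL n ⟨N.verts, N.arcs \ I⟩ T

/-- A tree-based network shape (given by a representative `N = (V, A)`) is universal if
for every rooted binary phylogenetic tree shape (given by a representative `T`) there is a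
set `I` of linking arcs such that `(V, A \ I)` is homeomorphic to `T` as unlabelled digraphs. -/
def ShapeUniversal (n : ℕ) (N : Dgraph) : Prop :=
  ∀ T : Dgraph, RBPT n T →
    ∃ I : Finset (ℕ × ℕ), I ⊆ N.arcs ∧ Homeomorphic ⟨N.verts, N.arcs \ I⟩ T

/-- Relabelling the vertices of a digraph by a function. -/
def relabel (f : ℕ → ℕ) (G : Dgraph) : Dgraph :=
  ⟨G.verts.image f, G.arcs.image fun a => (f a.1, f a.2)⟩

/-- `N'` is obtained from `N` by adding the crossover σ_{ij}: the terminal arcs `(u, i)`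
and `(v, j)` are each subdivided twice, creating `a₁, a₂` (towards `i`) and `b₁, b₂`
(towards `j`), and the crossed arcs `(a₁, b₂)` and `(b₁, a₂)` are added. -/
def CrossoverAt (N : Dgraph) (i j : ℕ) (N' : Dgraph) : Prop :=
  ∃ u v a1 a2 b1 b2 : ℕ,
    (u, i) ∈ N.arcs ∧ (v, j) ∈ N.arcs ∧
    a1 ∉ N.verts ∧ a2 ∉ N.verts ∧ b1 ∉ N.verts ∧ b2 ∉ N.verts ∧
    [a1, a2, b1, b2].Nodup ∧
    N' = ⟨N.verts ∪ {a1, a2, b1, b2},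
          (N.arcs \ {(u, i), (v, j)}) ∪
            {(u, a1), (a1, a2), (a2, i), (v, b1), (b1, b2), (b2, j), (a1, b2), (b1, a2)}⟩

end Dgraph

open Dgraph
/-- One crossover addition between the terminal arcs of two adjacent leaves i and i+1. -/
def AdjCrossStep (n : ℕ) (M M' : Dgraph) : Prop :=
  ∃ i : ℕ, i ∈ leafSet n ∧ i + 1 ∈ leafSet n ∧ CrossoverAt M i (i + 1) M'


/-!
A crossover `σ_ij` is symmetric: exchanging the labels `i` and `j` turns its two straight paths
`p → a1 → a2 → i`, `q → b1 → b2 → j` into crossed ones and its two crossed arcs into straight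
ones. So if `T` is a base tree of `N`, witnessed by a subdivision `T'` and linking arcs `I`, then
`T` with `i` and `j` swapped is a base tree of `N` plus `σ_ij`: subdivide the swapped `T'` along the
crossover, and take `I` together with the two formerly straight arcs as linking arcs. Smoothing
and the leaf-fixing isomorphism onto `N` lift through the crossover gadget, whose new vertices are
tree vertices and reticulations. Every permutation of `X` is a product of adjacent transpositions,
and realisations compose.
-/

namespace Dgraph

variable {G H : Dgraph} {u v w x y : ℕ}

lemma indeg_eq_card {s : Finset ℕ} (h : ∀ x, (x, v) ∈ G.arcs ↔ x ∈ s) :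
    G.indeg v = s.card := by
  rw [indeg, ← s.card_image_of_injective (f := fun x => (x, v)) fun _ _ h => (Prod.mk.inj h).1]
  congr 1
  ext ⟨x, y⟩
  simp only [Finset.mem_filter, Finset.mem_image, Prod.mk.injEq]
  constructor
  · rintro ⟨hxy, rfl⟩
    exact ⟨x, (h x).1 hxy, rfl, rfl⟩
  · rintro ⟨x, hx, rfl, rfl⟩
    exact ⟨(h x).2 hx, rfl⟩

lemma outdeg_eq_card {s : Finset ℕ} (h : ∀ y, (v, y) ∈ G.arcs ↔ y ∈ s) :
    G.outdeg v = s.card := by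
  rw [outdeg, ← s.card_image_of_injective (f := fun y => (v, y)) fun _ _ h => (Prod.mk.inj h).2]
  congr 1
  ext ⟨x, y⟩
  simp only [Finset.mem_filter, Finset.mem_image, Prod.mk.injEq]
  constructor
  · rintro ⟨hxy, rfl⟩
    exact ⟨y, (h y).1 hxy, rfl, rfl⟩
  · rintro ⟨y, hy, rfl, rfl⟩
    exact ⟨(h y).2 hy, rfl⟩

lemma indeg_eq_zero_iff : G.indeg v = 0 ↔ ∀ x, (x, v) ∉ G.arcs := by
  simp only [indeg, Finset.card_eq_zero, Finset.filter_eq_empty_iff, Prod.forall]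
  exact ⟨fun h x hx => h x v hx rfl, fun h x y hxy hy => h x (hy ▸ hxy)⟩

lemma outdeg_eq_zero_iff : G.outdeg v = 0 ↔ ∀ y, (v, y) ∉ G.arcs := by
  simp only [outdeg, Finset.card_eq_zero, Finset.filter_eq_empty_iff, Prod.forall]
  exact ⟨fun h y hy => h v y hy rfl, fun h x y hxy hx => h y (hx ▸ hxy)⟩

lemma indeg_eq_one_iff : G.indeg v = 1 ↔ ∃ u, ∀ x, (x, v) ∈ G.arcs ↔ x = u := by
  refine ⟨fun h => ?_, fun ⟨u, hu⟩ => by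
    simpa using indeg_eq_card (s := {u}) (by simpa using hu)⟩
  obtain ⟨⟨u, v'⟩, he⟩ := Finset.card_eq_one.1 h
  refine ⟨u, fun x => ?_⟩
  have := Finset.ext_iff.1 he (x, v)
  have hv : (u, v') ∈ G.arcs.filter (·.2 = v) := he ▸ Finset.mem_singleton_self _
  grind

lemma outdeg_eq_one_iff : G.outdeg v = 1 ↔ ∃ w, ∀ y, (v, y) ∈ G.arcs ↔ y = w := by
  refine ⟨fun h => ?_, fun ⟨w, hw⟩ => by
    simpa using outdeg_eq_card (s := {w}) (by simpa using hw)⟩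
  obtain ⟨⟨v', w⟩, he⟩ := Finset.card_eq_one.1 h
  refine ⟨w, fun y => ?_⟩
  have := Finset.ext_iff.1 he (v, y)
  have hv : (v', w) ∈ G.arcs.filter (·.1 = v) := he ▸ Finset.mem_singleton_self _
  grind

lemma indeg_eq_zero_of_not_mem (hG : G.WellFormed) (hv : v ∉ G.verts) : G.indeg v = 0 :=
  indeg_eq_zero_iff.2 fun _ h => hv (hG _ h).2

lemma indeg_eq_of_invOn (e e' : ℕ → ℕ)
    (he : ∀ x, (x, v) ∈ G.arcs → (e x, v) ∈ H.arcs)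
    (he' : ∀ x, (x, v) ∈ H.arcs → (e' x, v) ∈ G.arcs)
    (hl : ∀ x, (x, v) ∈ G.arcs → e' (e x) = x)
    (hr : ∀ x, (x, v) ∈ H.arcs → e (e' x) = x) :
    G.indeg v = H.indeg v := by
  refine Finset.card_nbij' (fun a => (e a.1, a.2)) (fun a => (e' a.1, a.2)) ?_ ?_ ?_ ?_ <;>
    rintro ⟨x, y⟩ hxy <;> grind

lemma outdeg_eq_of_invOn (e e' : ℕ → ℕ)
    (he : ∀ y, (v, y) ∈ G.arcs → (v, e y) ∈ H.arcs)
    (he' : ∀ y, (v, y) ∈ H.arcs → (v, e' y) ∈ G.arcs)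
    (hl : ∀ y, (v, y) ∈ G.arcs → e' (e y) = y)
    (hr : ∀ y, (v, y) ∈ H.arcs → e (e' y) = y) :
    G.outdeg v = H.outdeg v := by
  refine Finset.card_nbij' (fun a => (a.1, e a.2)) (fun a => (a.1, e' a.2)) ?_ ?_ ?_ ?_ <;>
    rintro ⟨x, y⟩ hxy <;> grind

def IsTerminalArc (G : Dgraph) (p x : ℕ) : Prop :=
  (∀ y, (y, x) ∈ G.arcs ↔ y = p) ∧ ∀ y, (x, y) ∉ G.arcs

lemma IsTerminalArc.mem (h : G.IsTerminalArc u x) : (u, x) ∈ G.arcs :=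
  (h.1 u).2 rfl

lemma IsTerminalArc.ne (h : G.IsTerminalArc u x) : u ≠ x :=
  fun hux => h.2 x (hux ▸ h.mem)

lemma isLeaf_iff_exists_isTerminalArc :
    G.IsLeaf x ↔ x ∈ G.verts ∧ ∃ p, G.IsTerminalArc p x := by
  simp only [IsLeaf, IsTerminalArc, indeg_eq_one_iff, outdeg_eq_zero_iff, exists_and_right]

section Networks

variable {n : ℕ} {N : Dgraph}

lemma mem_leafSet : x ∈ leafSet n ↔ 1 ≤ x ∧ x ≤ n :=
  Finset.mem_Icc

lemma RBPN.isLeaf_iff (hN : RBPN n N) : N.IsLeaf x ↔ x ∈ leafSet n :=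
  hN.2.2.1 x

lemma RBPN.leafSet_subset (hN : RBPN n N) : leafSet n ⊆ N.verts :=
  fun _ hx => (hN.isLeaf_iff.2 hx).1

lemma RBPN.exists_isTerminalArc (hN : RBPN n N) (hx : x ∈ leafSet n) :
    ∃ p, N.IsTerminalArc p x :=
  (isLeaf_iff_exists_isTerminalArc.1 (hN.isLeaf_iff.2 hx)).2

lemma RBPN.isTerminalArc (hN : RBPN n N) (hx : x ∈ leafSet n) (hux : (u, x) ∈ N.arcs) :
    N.IsTerminalArc u x := by
  obtain ⟨p, hp⟩ := hN.exists_isTerminalArc hx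
  rwa [(hp.1 u).1 hux]

lemma RBPN.not_smoothable (hN : RBPN n N) (v : ℕ) : ¬(N.indeg v = 1 ∧ N.outdeg v = 1) := by
  obtain ⟨hwf, -, hleaf, ρ, -, hρin, -, hother⟩ := hN
  by_cases hv : v ∈ N.verts
  · by_cases hvl : v ∈ leafSet n
    · have := ((hleaf v).2 hvl).2.2
      omega
    by_cases hvρ : v = ρ
    · subst hvρ; omega
    · have := hother v hv hvl hvρ
      omega
  · rw [indeg_eq_zero_of_not_mem hwf hv]
    omega

end Networks

lemma eq_of_reflTransGen_smoothStep (hG : ∀ v, ¬(G.indeg v = 1 ∧ G.outdeg v = 1))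
    (h : Relation.ReflTransGen SmoothStep G H) : H = G := by
  rcases Relation.ReflTransGen.cases_head h with rfl | ⟨_, ⟨_, v, _, hin, hout, -⟩, -⟩
  · rfl
  · exact absurd ⟨hin, hout⟩ (hG v)

namespace SmoothStep

variable (h : SmoothStep G H)
include h

lemma verts_subset : H.verts ⊆ G.verts := by
  obtain ⟨u, v, w, -, -, -, -, rfl⟩ := h
  exact Finset.erase_subset _ _

lemma reflTransGen_of_reflTransGen (hxy : Relation.ReflTransGen H.ArcRel x y) :
    Relation.ReflTransGen G.ArcRel x y := by
  obtain ⟨u, v, w, -, -, huv, hvw, rfl⟩ := h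
  refine Relation.reflTransGen_closed (fun a b hab => ?_) x y hxy
  simp only [ArcRel, Finset.mem_insert, Finset.mem_erase, Prod.mk.injEq] at hab
  rcases hab with ⟨rfl, rfl⟩ | ⟨-, -, hab⟩
  · exact .tail (.single huv) hvw
  · exact .single hab

lemma acyclic (hG : G.Acyclic) : H.Acyclic := by
  intro x y hxy hyx
  replace hyx := h.reflTransGen_of_reflTransGen hyx
  obtain ⟨u, v, w, -, -, huv, hvw, rfl⟩ := h
  simp only [ArcRel, Finset.mem_insert, Finset.mem_erase, Prod.mk.injEq] at hxy
  rcases hxy with ⟨rfl, rfl⟩ | ⟨-, -, hxy⟩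
  · exact hG x v huv (.head hvw hyx)
  · exact hG x y hxy hyx

lemma wellFormed (hG : G.WellFormed) (hA : G.Acyclic) : H.WellFormed := by
  obtain ⟨u, v, w, hin, hout, huv, hvw, rfl⟩ := h
  obtain ⟨u', hu'⟩ := indeg_eq_one_iff.1 hin
  obtain ⟨w', hw'⟩ := outdeg_eq_one_iff.1 hout
  have huv' : u ≠ v := fun h => hA u v huv (h ▸ .refl)
  have hvw' : v ≠ w := fun h => hA v w hvw (h ▸ .refl)
  rintro ⟨x, y⟩ hxy
  have := hG _ huv
  have := hG _ hvw
  have := hG (x, y)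
  simp only [Finset.mem_insert, Finset.mem_erase, Prod.mk.injEq] at hxy ⊢
  grind

end SmoothStep

lemma acyclic_of_reflTransGen_smoothStep (h : Relation.ReflTransGen SmoothStep G H)
    (hG : G.Acyclic) : H.Acyclic := by
  induction h with
  | refl => exact hG
  | tail _ hstep ih => exact SmoothStep.acyclic hstep ih

namespace SubdivStep

variable (h : SubdivStep G H)
include h

lemma verts_subset : G.verts ⊆ H.verts := by
  obtain ⟨u, v, w, -, -, rfl⟩ := h
  exact Finset.subset_insert _ _

lemma wellFormed (hG : G.WellFormed) : H.WellFormed := by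
  obtain ⟨u, v, w, huv, -, rfl⟩ := h
  rintro ⟨x, y⟩ hxy
  have := hG _ huv
  have := hG (x, y)
  simp only [Finset.mem_insert, Finset.mem_erase, Prod.mk.injEq] at hxy ⊢
  grind

lemma exists_isTerminalArc (hG : G.WellFormed) (hx : G.IsTerminalArc u x) :
    ∃ u', H.IsTerminalArc u' x := by
  obtain ⟨a, b, w, hab, hw, rfl⟩ := h
  have hxw : x ≠ w := fun hxw => hw (hxw ▸ (hG _ hx.mem).2)
  obtain ⟨hin, hout⟩ := hx
  refine ⟨if b = x then w else u, fun y => ?_, fun y => ?_⟩ <;>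
    simp only [Finset.mem_insert, Finset.mem_erase, Prod.mk.injEq] <;> grind

end SubdivStep

namespace Subdivision

variable (h : Subdivision G H)
include h

lemma verts_subset : G.verts ⊆ H.verts := by
  induction h with
  | refl => exact le_rfl
  | tail _ hstep ih => exact ih.trans (SubdivStep.verts_subset hstep)

lemma wellFormed (hG : G.WellFormed) : H.WellFormed := by
  induction h with
  | refl => exact hG
  | tail _ hstep ih => exact SubdivStep.wellFormed hstep ih

lemma exists_isTerminalArc (hG : G.WellFormed) (hx : G.IsTerminalArc u x) :
    ∃ u', H.IsTerminalArc u' x := by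
  induction h with
  | refl => exact ⟨u, hx⟩
  | tail hGM hstep ih =>
    obtain ⟨u', hu'⟩ := ih
    exact SubdivStep.exists_isTerminalArc hstep (wellFormed hGM hG) hu'

end Subdivision

section Relabel

variable (σ : Equiv.Perm ℕ)

lemma relabel_relabel (f g : ℕ → ℕ) (G : Dgraph) :
    relabel f (relabel g G) = relabel (f ∘ g) G := by
  simp only [relabel, Finset.image_image]
  rfl

lemma relabel_one (G : Dgraph) : relabel (1 : Equiv.Perm ℕ) G = G := by
  simp [relabel]

lemma mem_relabel_verts : x ∈ (relabel σ G).verts ↔ σ.symm x ∈ G.verts := by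
  simp [relabel, ← σ.eq_symm_apply]

lemma mem_relabel_arcs : (x, y) ∈ (relabel σ G).arcs ↔ (σ.symm x, σ.symm y) ∈ G.arcs := by
  simp [relabel, ← σ.eq_symm_apply]

lemma wellFormed_relabel (hG : G.WellFormed) : (relabel σ G).WellFormed := by
  rintro ⟨x, y⟩ hxy
  rw [mem_relabel_arcs] at hxy
  exact ⟨(mem_relabel_verts σ).2 (hG _ hxy).1, (mem_relabel_verts σ).2 (hG _ hxy).2⟩

lemma acyclic_relabel (hG : G.Acyclic) : (relabel σ G).Acyclic := by
  intro x y hxy hyx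
  exact hG _ _ ((mem_relabel_arcs σ).1 hxy)
    (Relation.ReflTransGen.lift σ.symm (fun _ _ h => (mem_relabel_arcs σ).1 h) _ _ hyx)

lemma injective_pairMap : Function.Injective fun a : ℕ × ℕ => (σ a.1, σ a.2) :=
  σ.injective.prodMap σ.injective

lemma indeg_relabel (G : Dgraph) (v : ℕ) : (relabel σ G).indeg (σ v) = G.indeg v := by
  simp only [indeg, relabel, Finset.filter_image, σ.injective.eq_iff,
    Finset.card_image_of_injective _ (injective_pairMap σ)]

lemma outdeg_relabel (G : Dgraph) (v : ℕ) : (relabel σ G).outdeg (σ v) = G.outdeg v := by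
  simp only [outdeg, relabel, Finset.filter_image, σ.injective.eq_iff,
    Finset.card_image_of_injective _ (injective_pairMap σ)]

lemma isTerminalArc_relabel (h : G.IsTerminalArc u x) :
    (relabel σ G).IsTerminalArc (σ u) (σ x) := by
  refine ⟨fun y => ?_, fun y => ?_⟩ <;> simp only [mem_relabel_arcs, Equiv.symm_apply_apply]
  · rw [h.1, σ.symm_apply_eq]
  · exact h.2 _

lemma relabel_verts_of_forall (h : ∀ x, σ x ∈ G.verts ↔ x ∈ G.verts) :
    (relabel σ G).verts = G.verts := by
  ext x
  rw [mem_relabel_verts, ← h, Equiv.apply_symm_apply]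

lemma rbpn_relabel {n : ℕ} (hσ : ∀ x, σ x ∈ leafSet n ↔ x ∈ leafSet n) (hG : RBPN n G) :
    RBPN n (relabel σ G) := by
  obtain ⟨hwf, hA, hleaf, ρ, hρ, hρin, hρout, hother⟩ := hG
  have hσ' : ∀ x, σ.symm x ∈ leafSet n ↔ x ∈ leafSet n := fun x => by
    rw [← hσ, Equiv.apply_symm_apply]
  have hdeg : ∀ v, (relabel σ G).indeg v = G.indeg (σ.symm v) ∧
      (relabel σ G).outdeg v = G.outdeg (σ.symm v) := fun v => by
    simpa using And.intro (indeg_relabel σ G (σ.symm v)) (outdeg_relabel σ G (σ.symm v))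
  refine ⟨wellFormed_relabel σ hwf, acyclic_relabel σ hA, fun v => ?_, σ ρ, ?_, ?_, ?_,
    fun v hv hvl hvρ => ?_⟩
  · rw [IsLeaf, mem_relabel_verts, (hdeg v).1, (hdeg v).2, ← hσ', ← hleaf]; rfl
  · simpa [mem_relabel_verts] using hρ
  · rwa [indeg_relabel]
  · rwa [outdeg_relabel]
  · rw [(hdeg v).1, (hdeg v).2]
    rw [mem_relabel_verts] at hv
    exact hother _ hv (by rwa [hσ']) (by rintro rfl; simp at hvρ)

lemma rbpt_relabel {n : ℕ} (hσ : ∀ x, σ x ∈ leafSet n ↔ x ∈ leafSet n) (hG : RBPT n G) :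
    RBPT n (relabel σ G) :=
  ⟨rbpn_relabel σ hσ hG.1, fun v => by
    rw [← σ.apply_symm_apply v, indeg_relabel]
    exact hG.2 _⟩

lemma subdivStep_relabel (h : SubdivStep G H) : SubdivStep (relabel σ G) (relabel σ H) := by
  obtain ⟨u, v, w, huv, hw, rfl⟩ := h
  refine ⟨σ u, σ v, σ w, by simpa [mem_relabel_arcs], by simpa [mem_relabel_verts], ?_⟩
  simp only [Dgraph.relabel, Finset.image_insert, Finset.image_erase (injective_pairMap σ)]

lemma subdivision_relabel (h : Subdivision G H) : Subdivision (relabel σ G) (relabel σ H) :=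
  Relation.ReflTransGen.lift (relabel σ) (fun _ _ => subdivStep_relabel σ) _ _ h

end Relabel

lemma acyclic_of_ranked_downset (K : ℕ → Prop) (r : ℕ → ℕ) (hG : G.Acyclic)
    (hK : ∀ x y, (x, y) ∈ H.arcs → K x → K y ∧ r y < r x)
    (hKc : ∀ x y, (x, y) ∈ H.arcs → ¬K y → ¬K x ∧ (x, y) ∈ G.arcs) : H.Acyclic := by
  have hdown : ∀ {x y}, Relation.ReflTransGen H.ArcRel x y → K x → K y ∧ r y ≤ r x := by
    intro x y hxy hx
    induction hxy with
    | refl => exact ⟨hx, le_rfl⟩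
    | tail _ hab ih => exact ⟨(hK _ _ hab ih.1).1, ((hK _ _ hab ih.1).2.trans_le ih.2).le⟩
  have hup : ∀ {x y}, Relation.ReflTransGen H.ArcRel x y → ¬K y →
      Relation.ReflTransGen G.ArcRel x y := by
    intro x y hxy hy
    induction hxy with
    | refl => exact .refl
    | tail _ hab ih => exact (ih (hKc _ _ hab hy).1).tail (hKc _ _ hab hy).2
  intro x y hxy hyx
  by_cases hx : K x
  · obtain ⟨hy, hr⟩ := hK x y hxy hx
    exact (hdown hyx hy).2.not_gt hr
  · have hy : ¬K y := fun hy => hx (hdown hyx hy).1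
    exact hG x y (hKc x y hxy hy).2 (hup hyx hx)

def crossover (G : Dgraph) (i j p q a1 a2 b1 b2 : ℕ) : Dgraph :=
  ⟨G.verts ∪ {a1, a2, b1, b2},
    (G.arcs \ {(p, i), (q, j)}) ∪
      {(p, a1), (a1, a2), (a2, i), (q, b1), (b1, b2), (b2, j), (a1, b2), (b1, a2)}⟩

section Crossover

variable {i j p q a1 a2 b1 b2 : ℕ}

@[simp] lemma mem_crossover_verts :
    x ∈ (G.crossover i j p q a1 a2 b1 b2).verts ↔
      x ∈ G.verts ∨ x = a1 ∨ x = a2 ∨ x = b1 ∨ x = b2 := by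
  simp only [crossover, Finset.mem_union, Finset.mem_insert, Finset.mem_singleton]

@[simp] lemma mem_crossover_arcs :
    (x, y) ∈ (G.crossover i j p q a1 a2 b1 b2).arcs ↔
      ((x, y) ∈ G.arcs ∧ ¬(x = p ∧ y = i) ∧ ¬(x = q ∧ y = j)) ∨
      (x = p ∧ y = a1) ∨ (x = a1 ∧ y = a2) ∨ (x = a2 ∧ y = i) ∨
      (x = q ∧ y = b1) ∨ (x = b1 ∧ y = b2) ∨ (x = b2 ∧ y = j) ∨
      (x = a1 ∧ y = b2) ∨ (x = b1 ∧ y = a2) := by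
  simp only [crossover, Finset.mem_union, Finset.mem_sdiff, Finset.mem_insert,
    Finset.mem_singleton, Prod.mk.injEq, not_or]

lemma crossover_union {I : Finset (ℕ × ℕ)} (hI : (p, i) ∉ I ∧ (q, j) ∉ I) :
    (⟨G.verts, G.arcs ∪ I⟩ : Dgraph).crossover i j p q a1 a2 b1 b2 =
      ⟨(G.crossover i j p q a1 a2 b1 b2).verts,
        (G.crossover i j p q a1 a2 b1 b2).arcs ∪ I⟩ := by
  simp only [crossover, mk.injEq, true_and]
  ext ⟨x, y⟩
  simp only [Finset.mem_union, Finset.mem_sdiff, Finset.mem_insert, Finset.mem_singleton,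
    Prod.mk.injEq]
  grind

structure CrossoverData (G : Dgraph) (i j p q a1 a2 b1 b2 : ℕ) : Prop where
  wellFormed : G.WellFormed
  ne : i ≠ j
  terminal_left : G.IsTerminalArc p i
  terminal_right : G.IsTerminalArc q j
  fresh : ∀ x ∈ [a1, a2, b1, b2], x ∉ G.verts
  nodup : [a1, a2, b1, b2].Nodup

namespace CrossoverData

variable (C : CrossoverData G i j p q a1 a2 b1 b2)
include C

lemma endpoints_mem : (p ∈ G.verts ∧ i ∈ G.verts) ∧ q ∈ G.verts ∧ j ∈ G.verts :=
  ⟨C.wellFormed _ C.terminal_left.mem, C.wellFormed _ C.terminal_right.mem⟩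

lemma parents_ne : (p ≠ i ∧ p ≠ j) ∧ q ≠ i ∧ q ≠ j :=
  ⟨⟨C.terminal_left.ne, fun h => C.terminal_right.2 i (h ▸ C.terminal_left.mem)⟩,
    fun h => C.terminal_left.2 j (h ▸ C.terminal_right.mem), C.terminal_right.ne⟩

lemma wellFormed_crossover : (G.crossover i j p q a1 a2 b1 b2).WellFormed := by
  have := C.endpoints_mem
  have := C.parents_ne
  obtain ⟨hG, -, -, -, -, -⟩ := C
  rintro ⟨x, y⟩ hxy
  have := hG (x, y)
  simp only [mem_crossover_arcs, mem_crossover_verts] at hxy ⊢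
  grind

lemma acyclic_crossover (hA : G.Acyclic) : (G.crossover i j p q a1 a2 b1 b2).Acyclic := by
  have := C.endpoints_mem
  have := C.parents_ne
  obtain ⟨hG, hij, ⟨hi, hi'⟩, ⟨hj, hj'⟩, hfresh, hnd⟩ := C
  -- No arc leaves the gadget together with `i` and `j`, and inside it the rank drops along arcs.
  refine acyclic_of_ranked_downset
    (fun x => x = a1 ∨ x = a2 ∨ x = b1 ∨ x = b2 ∨ x = i ∨ x = j)
    (fun x => if x = a1 ∨ x = b1 then 2 else if x = a2 ∨ x = b2 then 1 else 0) hA ?_ ?_ <;>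
  · intro x y hxy
    have := hG (x, y)
    simp only [mem_crossover_arcs] at hxy
    grind

lemma indeg_outdeg_crossover (hv : v ∈ G.verts) :
    (G.crossover i j p q a1 a2 b1 b2).indeg v = G.indeg v ∧
      (G.crossover i j p q a1 a2 b1 b2).outdeg v = G.outdeg v := by
  have := C.endpoints_mem
  have := C.parents_ne
  obtain ⟨hG, hij, ⟨hi, hi'⟩, ⟨hj, hj'⟩, hfresh, hnd⟩ := C
  have hG' := fun x y => hG (x, y)
  -- At the head `i` the in-neighbour `p` becomes `a2`, at the tail `p` the out-neighbour `i`
  -- becomes `a1`; likewise for `j`, `q`, `b2`, `b1`.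
  constructor
  · refine (indeg_eq_of_invOn
      (fun x => if v = i ∧ x = p then a2 else if v = j ∧ x = q then b2 else x)
      (fun x => if x = a2 then p else if x = b2 then q else x) ?_ ?_ ?_ ?_).symm <;>
      grind [mem_crossover_arcs]
  · refine (outdeg_eq_of_invOn
      (fun y => if v = p ∧ y = i then a1 else if v = q ∧ y = j then b1 else y)
      (fun y => if y = a1 then i else if y = b1 then j else y) ?_ ?_ ?_ ?_).symm <;>
      grind [mem_crossover_arcs]

lemma indeg_outdeg_crossover_gadget (hv : v ∈ [a1, a2, b1, b2]) :
    ((G.crossover i j p q a1 a2 b1 b2).indeg v = 1 ∧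
        (G.crossover i j p q a1 a2 b1 b2).outdeg v = 2) ∨
      ((G.crossover i j p q a1 a2 b1 b2).indeg v = 2 ∧
        (G.crossover i j p q a1 a2 b1 b2).outdeg v = 1) := by
  have := C.endpoints_mem
  have := C.parents_ne
  obtain ⟨hG, hij, ⟨hi, hi'⟩, ⟨hj, hj'⟩, hfresh, hnd⟩ := C
  have hG' := fun x y => hG (x, y)
  simp only [List.mem_cons, List.not_mem_nil, or_false] at hv
  rcases hv with rfl | rfl | rfl | rfl
  · exact .inl ⟨indeg_eq_card (s := {p}) (by grind [mem_crossover_arcs]),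
      (outdeg_eq_card (s := {a2, b2}) (by grind [mem_crossover_arcs])).trans
        (Finset.card_pair (by grind))⟩
  · exact .inr ⟨(indeg_eq_card (s := {a1, b1}) (by grind [mem_crossover_arcs])).trans
        (Finset.card_pair (by grind)),
      outdeg_eq_card (s := {i}) (by grind [mem_crossover_arcs])⟩
  · exact .inl ⟨indeg_eq_card (s := {q}) (by grind [mem_crossover_arcs]),
      (outdeg_eq_card (s := {b2, a2}) (by grind [mem_crossover_arcs])).trans
        (Finset.card_pair (by grind))⟩
  · exact .inr ⟨(indeg_eq_card (s := {b1, a1}) (by grind [mem_crossover_arcs])).trans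
        (Finset.card_pair (by grind)),
      outdeg_eq_card (s := {j}) (by grind [mem_crossover_arcs])⟩

lemma not_smoothable_crossover (hG : ∀ v, ¬(G.indeg v = 1 ∧ G.outdeg v = 1)) (v : ℕ) :
    ¬((G.crossover i j p q a1 a2 b1 b2).indeg v = 1 ∧
      (G.crossover i j p q a1 a2 b1 b2).outdeg v = 1) := by
  by_cases hv : v ∈ G.verts
  · rw [(C.indeg_outdeg_crossover hv).1, (C.indeg_outdeg_crossover hv).2]
    exact hG v
  by_cases hnew : v ∈ [a1, a2, b1, b2]
  · have := C.indeg_outdeg_crossover_gadget hnew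
    omega
  · rw [indeg_eq_zero_of_not_mem C.wellFormed_crossover (by simp_all)]
    omega

lemma rbpn_crossover {n : ℕ} (hG : RBPN n G) : RBPN n (G.crossover i j p q a1 a2 b1 b2) := by
  have hsub := hG.leafSet_subset
  obtain ⟨-, hA, hleaf, ρ, hρ, hρin, hρout, hother⟩ := hG
  have hnew : ∀ v ∈ [a1, a2, b1, b2], v ∉ leafSet n := fun v hv hvl => C.fresh v hv (hsub hvl)
  refine ⟨C.wellFormed_crossover, C.acyclic_crossover hA, fun v => ?_, ρ, by simp [hρ],
    by rwa [(C.indeg_outdeg_crossover hρ).1], by rwa [(C.indeg_outdeg_crossover hρ).2],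
    fun v hv hvl hvρ => ?_⟩
  · by_cases hv : v ∈ G.verts
    · rw [IsLeaf, (C.indeg_outdeg_crossover hv).1, (C.indeg_outdeg_crossover hv).2, ← hleaf,
        IsLeaf]
      simp [hv]
    by_cases hv' : v ∈ [a1, a2, b1, b2]
    · have := C.indeg_outdeg_crossover_gadget hv'
      simp only [IsLeaf, hnew v hv', iff_false]
      omega
    · have : v ∉ leafSet n := fun hvl => hv (hsub hvl)
      simp only [IsLeaf, mem_crossover_verts]
      grind
  · rcases (mem_crossover_verts).1 hv with hv | hv
    · rw [(C.indeg_outdeg_crossover hv).1, (C.indeg_outdeg_crossover hv).2]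
      exact hother v hv hvl hvρ
    · exact C.indeg_outdeg_crossover_gadget (by simpa using hv)

lemma smoothStep_crossover (hA : G.Acyclic) (hs : SmoothStep G H) :
    ∃ p' q', CrossoverData H i j p' q' a1 a2 b1 b2 ∧
      SmoothStep (G.crossover i j p q a1 a2 b1 b2) (H.crossover i j p' q' a1 a2 b1 b2) := by
  have hH := SmoothStep.wellFormed hs C.wellFormed hA
  have hHG := SmoothStep.verts_subset hs
  obtain ⟨u, v, w, hin, hout, huv, hvw, rfl⟩ := hs
  have hdeg := C.indeg_outdeg_crossover (C.wellFormed _ huv).2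
  have := C.endpoints_mem
  have := C.parents_ne
  obtain ⟨hG, hij, ⟨hi, hi'⟩, ⟨hj, hj'⟩, hfresh, hnd⟩ := C
  obtain ⟨u', hu'⟩ := indeg_eq_one_iff.1 hin
  obtain ⟨w', hw'⟩ := outdeg_eq_one_iff.1 hout
  have hG' := fun x y => hG (x, y)
  have huv' : u ≠ v := fun h => hA u v huv (h ▸ .refl)
  have hvw' : v ≠ w := fun h => hA v w hvw (h ▸ .refl)
  have hpi := (hi p).2 rfl
  have hqj := (hj q).2 rfl
  -- Smoothing the parent `p` of `i` makes its own parent `u` the new parent of `i`.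
  refine ⟨if v = p then u else p, if v = q then u else q,
    ⟨hH, hij, ⟨fun y => ?_, fun y => ?_⟩, ⟨fun y => ?_, fun y => ?_⟩,
      fun x hx hxH => hfresh x hx (hHG hxH), hnd⟩,
    u, v, if v = p then a1 else if v = q then b1 else w, by rw [hdeg.1, hin], by rw [hdeg.2, hout],
    ?_, ?_, ?eq⟩
  case eq =>
    simp only [crossover, mk.injEq]
    constructor
    · ext x
      simp only [Finset.mem_union, Finset.mem_erase, Finset.mem_insert, Finset.mem_singleton]
      grind
    · ext ⟨x, y⟩
      simp only [Finset.mem_union, Finset.mem_erase, Finset.mem_insert, Finset.mem_singleton,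
        Finset.mem_sdiff, Prod.mk.injEq, ne_eq]
      split_ifs <;> grind
  all_goals simp only [Finset.mem_insert, Finset.mem_erase, mem_crossover_arcs, Prod.mk.injEq]
  all_goals grind

lemma reflTransGen_smoothStep_crossover (hA : G.Acyclic)
    (hs : Relation.ReflTransGen SmoothStep G H) :
    ∃ p' q', CrossoverData H i j p' q' a1 a2 b1 b2 ∧
      Relation.ReflTransGen SmoothStep (G.crossover i j p q a1 a2 b1 b2)
        (H.crossover i j p' q' a1 a2 b1 b2) := by
  induction hs with
  | refl => exact ⟨p, q, C, .refl⟩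
  | tail hGM hstep ih =>
    obtain ⟨p', q', C', hsteps⟩ := ih
    obtain ⟨p'', q'', C'', hstep'⟩ :=
      C'.smoothStep_crossover (acyclic_of_reflTransGen_smoothStep hGM hA) hstep
    exact ⟨p'', q'', C'', hsteps.tail hstep'⟩

lemma injOn_crossover {N : Dgraph} {u v c1 c2 d1 d2 : ℕ}
    (C' : CrossoverData N i j u v c1 c2 d1 d2) {f e : ℕ → ℕ} (hf : IsIsoOn f G N)
    (hold : ∀ x ∈ G.verts, e x = f x)
    (hnew : e a1 = c1 ∧ e a2 = c2 ∧ e b1 = d1 ∧ e b2 = d2) :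
    ∀ x ∈ (G.crossover i j p q a1 a2 b1 b2).verts,
      ∀ y ∈ (G.crossover i j p q a1 a2 b1 b2).verts, e x = e y ↔ x = y := by
  have hmaps : ∀ x ∈ G.verts, f x ∈ N.verts := fun x hx => hf.1.1 hx
  have hinj : ∀ x ∈ G.verts, ∀ y ∈ G.verts, f x = f y → x = y := fun x hx y hy => hf.1.2.1 hx hy
  have := C.fresh
  have := C.nodup
  have := C'.fresh
  have := C'.nodup
  simp only [mem_crossover_verts]
  grind

lemma isIsoOn_crossover {N : Dgraph} {u v c1 c2 d1 d2 : ℕ}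
    (C' : CrossoverData N i j u v c1 c2 d1 d2) {f e : ℕ → ℕ} (hf : IsIsoOn f G N)
    (hfp : f p = u) (hfq : f q = v) (hfi : f i = i) (hfj : f j = j)
    (hold : ∀ x ∈ G.verts, e x = f x)
    (hnew : e a1 = c1 ∧ e a2 = c2 ∧ e b1 = d1 ∧ e b2 = d2) :
    IsIsoOn e (G.crossover i j p q a1 a2 b1 b2) (N.crossover i j u v c1 c2 d1 d2) := by
  have hinjX := C.injOn_crossover C' hf hold hnew
  have := C.endpoints_mem
  -- `e` transports every atom of `mem_crossover_arcs`, so the two arc relations agree.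
  have hatoms : ∀ x ∈ (G.crossover i j p q a1 a2 b1 b2).verts,
      ((e x = u ↔ x = p) ∧ (e x = v ↔ x = q) ∧ (e x = i ↔ x = i) ∧
        (e x = j ↔ x = j)) ∧
      ((e x = c1 ↔ x = a1) ∧ (e x = c2 ↔ x = a2) ∧ (e x = d1 ↔ x = b1) ∧
        (e x = d2 ↔ x = b2)) := by
    intro x hx
    have := fun y hy => hinjX x hx y (by simpa using hy)
    grind
  have hout : ∀ z ∈ (G.crossover i j p q a1 a2 b1 b2).verts, e z ∈ N.verts → z ∈ G.verts := by
    have := C'.fresh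
    simp only [mem_crossover_verts]
    grind
  have hold_arcs : ∀ x ∈ (G.crossover i j p q a1 a2 b1 b2).verts,
      ∀ y ∈ (G.crossover i j p q a1 a2 b1 b2).verts,
        (e x, e y) ∈ N.arcs ↔ (x, y) ∈ G.arcs := by
    intro x hx y hy
    by_cases hxy : x ∈ G.verts ∧ y ∈ G.verts
    · rw [hold x hxy.1, hold y hxy.2, hf.2 x hxy.1 y hxy.2]
    exact ⟨fun h => absurd ⟨hout x hx (C'.wellFormed _ h).1, hout y hy (C'.wellFormed _ h).2⟩ hxy,
      fun h => absurd (C.wellFormed _ h) hxy⟩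
  refine ⟨⟨fun x hx => ?_, fun x hx y hy hxy => (hinjX x hx y hy).1 hxy, fun y hy => ?_⟩,
    fun x hx y hy => ?_⟩
  · simp only [Finset.mem_coe, mem_crossover_verts] at hx ⊢
    rcases hx with hx | rfl | rfl | rfl | rfl
    · exact .inl (hold x hx ▸ hf.1.1 hx)
    all_goals simp [hnew]
  · simp only [Finset.mem_coe, mem_crossover_verts, Set.mem_image] at hy ⊢
    rcases hy with hy | rfl | rfl | rfl | rfl
    · obtain ⟨x, hx, rfl⟩ := hf.1.2.2 hy
      exact ⟨x, .inl hx, hold x hx⟩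
    exacts [⟨a1, by simp, hnew.1⟩, ⟨a2, by simp, hnew.2.1⟩, ⟨b1, by simp, hnew.2.2.1⟩,
      ⟨b2, by simp, hnew.2.2.2⟩]
  · simp only [mem_crossover_arcs, hatoms x hx, hatoms y hy, hold_arcs x hx y hy]

lemma homeomorphicL_crossover {n : ℕ} {N : Dgraph} {u v c1 c2 d1 d2 : ℕ}
    (C' : CrossoverData N i j u v c1 c2 d1 d2) (hA : G.Acyclic)
    (hN : ∀ v, ¬(N.indeg v = 1 ∧ N.outdeg v = 1)) (hleaves : leafSet n ⊆ G.verts)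
    (hi : i ∈ leafSet n) (hj : j ∈ leafSet n) (hGN : HomeomorphicL n G N) :
    HomeomorphicL n (G.crossover i j p q a1 a2 b1 b2) (N.crossover i j u v c1 c2 d1 d2) := by
  obtain ⟨G₁, N₁, ⟨hGG₁, hG₁⟩, ⟨hNN₁, -⟩, f, hf, hfix⟩ := hGN
  obtain rfl := eq_of_reflTransGen_smoothStep hN hNN₁
  obtain ⟨p₁, q₁, C₁, hsteps⟩ := C.reflTransGen_smoothStep_crossover hA hGG₁
  obtain ⟨⟨hp₁, hi₁⟩, hq₁, hj₁⟩ := C₁.endpoints_mem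
  have hfp : f p₁ = u :=
    (C'.terminal_left.1 _).1 (hfix i hi ▸ (hf.2 _ hp₁ _ hi₁).1 C₁.terminal_left.mem)
  have hfq : f q₁ = v :=
    (C'.terminal_right.1 _).1 (hfix j hj ▸ (hf.2 _ hq₁ _ hj₁).1 C₁.terminal_right.mem)
  have := C.fresh
  have := C.nodup
  refine ⟨_, _, ⟨hsteps, C₁.not_smoothable_crossover hG₁⟩,
    ⟨.refl, C'.not_smoothable_crossover hN⟩,
    fun x => if x = a1 then c1 else if x = a2 then c2 else if x = b1 then d1
      else if x = b2 then d2 else f x,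
    C₁.isIsoOn_crossover C' hf hfp hfq (hfix i hi) (hfix j hj) (fun x hx => ?_) (by grind),
    fun x hx => ?_⟩
  · have := C₁.fresh
    grind
  · have := hleaves hx
    have := hfix x hx
    grind

lemma subdivision_crossover_sdiff :
    Subdivision G ⟨(G.crossover i j p q a1 a2 b1 b2).verts,
      (G.crossover i j p q a1 a2 b1 b2).arcs \ {(a1, b2), (b1, a2)}⟩ := by
  have := C.endpoints_mem
  have := C.parents_ne
  obtain ⟨hG, hij, ⟨hi, hi'⟩, ⟨hj, hj'⟩, hfresh, hnd⟩ := C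
  have hG' := fun x y => hG (x, y)
  simp only [List.nodup_cons, List.mem_cons, List.not_mem_nil, List.nodup_nil, not_or, or_false,
    and_true] at hfresh hnd
  refine .tail (.tail (.tail (.single ⟨p, i, a2, ?_, ?_, rfl⟩) ⟨p, a2, a1, ?_, ?_, rfl⟩)
    ⟨q, j, b2, ?_, ?_, rfl⟩) ⟨q, b2, b1, ?_, ?_, ?eq⟩
  case eq =>
    simp only [crossover, mk.injEq]
    constructor
    · ext x
      simp only [Finset.mem_union, Finset.mem_insert, Finset.mem_singleton]
      grind
    · ext ⟨x, y⟩
      simp only [Finset.mem_union, Finset.mem_erase, Finset.mem_insert, Finset.mem_singleton,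
        Finset.mem_sdiff, Prod.mk.injEq, ne_eq]
      grind
  all_goals grind

lemma relabel_swap : CrossoverData (relabel (Equiv.swap i j) G) j i p q a1 b2 b1 a2 := by
  have := C.endpoints_mem
  have hσ : (relabel (Equiv.swap i j) G).verts = G.verts :=
    relabel_verts_of_forall _ fun x => by rw [Equiv.swap_apply_def]; grind
  obtain ⟨⟨hpi, hpj⟩, hqi, hqj⟩ := C.parents_ne
  refine ⟨wellFormed_relabel _ C.wellFormed, C.ne.symm, ?_, ?_, by rw [hσ]; grind [C.fresh],
    by grind [C.nodup]⟩
  · simpa [Equiv.swap_apply_of_ne_of_ne hpi hpj] using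
      isTerminalArc_relabel (Equiv.swap i j) C.terminal_left
  · simpa [Equiv.swap_apply_of_ne_of_ne hqi hqj] using
      isTerminalArc_relabel (Equiv.swap i j) C.terminal_right

/-- Relabelling `i ↔ j` exchanges the straight paths `p → a1 → a2 → i`, `q → b1 → b2 → j` of
the crossover with the crossed ones `p → a1 → b2 → j`, `q → b1 → a2 → i`. -/
lemma crossover_relabel_swap :
    (relabel (Equiv.swap i j) G).crossover j i p q a1 b2 b1 a2 =
      G.crossover i j p q a1 a2 b1 b2 := by
  have := C.endpoints_mem
  obtain ⟨-, -, ⟨hp, hi'⟩, ⟨hq, hj'⟩, -, -⟩ := C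
  simp only [crossover, mk.injEq]
  constructor
  · ext x
    simp only [Finset.mem_union, Finset.mem_insert, Finset.mem_singleton, mem_relabel_verts,
      Equiv.symm_swap, Equiv.swap_apply_def]
    grind
  · ext ⟨x, y⟩
    simp only [Finset.mem_union, Finset.mem_insert, Finset.mem_singleton, Finset.mem_sdiff,
      mem_relabel_arcs, Equiv.symm_swap, Equiv.swap_apply_def, Prod.mk.injEq]
    grind

lemma union_crossover_eq {I : Finset (ℕ × ℕ)} (hI : (p, i) ∉ I ∧ (q, j) ∉ I) :
    (⟨G.verts, G.arcs ∪ I⟩ : Dgraph).crossover i j p q a1 a2 b1 b2 =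
      ⟨((relabel (Equiv.swap i j) G).crossover j i p q a1 b2 b1 a2).verts,
        ((relabel (Equiv.swap i j) G).crossover j i p q a1 b2 b1 a2).arcs \
          {(a1, a2), (b1, b2)} ∪ (I ∪ {(a1, a2), (b1, b2)})⟩ := by
  rw [crossover_union hI, ← C.crossover_relabel_swap, mk.injEq]
  refine ⟨rfl, ?_⟩
  ext a
  simp only [Finset.mem_union, Finset.mem_sdiff, Finset.mem_insert, Finset.mem_singleton]
  grind [mem_crossover_arcs]

lemma union {I : Finset (ℕ × ℕ)}
    (hI : ∀ a ∈ I, (a.1 ∈ G.verts ∧ a.1 ≠ i ∧ a.1 ≠ j) ∧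
      a.2 ∈ G.verts ∧ a.2 ≠ i ∧ a.2 ≠ j) :
    CrossoverData ⟨G.verts, G.arcs ∪ I⟩ i j p q a1 a2 b1 b2 := by
  obtain ⟨hG, hij, ⟨hp, hi⟩, ⟨hq, hj⟩, hfresh, hnd⟩ := C
  refine ⟨fun a ha => (Finset.mem_union.1 ha).elim (hG a)
      fun ha => ⟨(hI a ha).1.1, (hI a ha).2.1⟩, hij,
    ⟨fun y => ?_, fun y => ?_⟩, ⟨fun y => ?_, fun y => ?_⟩, hfresh, hnd⟩ <;>
    simp only [Finset.mem_union] <;> grind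

end CrossoverData

lemma exists_fresh_gadget (s : Finset ℕ) :
    ∃ a1 a2 b1 b2 : ℕ, (∀ x ∈ [a1, a2, b1, b2], x ∉ s) ∧ [a1, a2, b1, b2].Nodup := by
  refine ⟨s.sup id + 1, s.sup id + 2, s.sup id + 3, s.sup id + 4, fun x hx hxs => ?_, by simp⟩
  have := Finset.le_sup (f := id) hxs
  simp only [List.mem_cons, List.not_mem_nil, or_false, id] at hx this
  omega

lemma disjointArcs_union_gadget {I : Finset (ℕ × ℕ)} {V : Finset ℕ} (hI : DisjointArcs I)
    (hIV : ∀ a ∈ I, a.1 ∈ V ∧ a.2 ∈ V) (hfresh : ∀ x ∈ [a1, a2, b1, b2], x ∉ V)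
    (hnd : [a1, a2, b1, b2].Nodup) : DisjointArcs (I ∪ {(a1, a2), (b1, b2)}) := by
  intro a ha b hb hab
  simp only [Finset.mem_union, Finset.mem_insert, Finset.mem_singleton] at ha hb
  have := hI a
  have := hIV a
  have := hIV b
  grind

lemma CrossoverAt.exists_crossoverData {n i j : ℕ} {N N' : Dgraph} (hN : RBPN n N) (hij : i ≠ j)
    (hi : i ∈ leafSet n) (hj : j ∈ leafSet n) (hcr : CrossoverAt N i j N') :
    ∃ u v c1 c2 d1 d2, CrossoverData N i j u v c1 c2 d1 d2 ∧
      N' = N.crossover i j u v c1 c2 d1 d2 := by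
  obtain ⟨u, v, c1, c2, d1, d2, hu, hv, hc1, hc2, hd1, hd2, hnd, rfl⟩ := hcr
  exact ⟨u, v, c1, c2, d1, d2,
    ⟨hN.1, hij, hN.isTerminalArc hi hu, hN.isTerminalArc hj hv, by simp [*], hnd⟩, rfl⟩

lemma CrossoverAt.rbpn {n i j : ℕ} {N N' : Dgraph} (hN : RBPN n N) (hij : i ≠ j)
    (hi : i ∈ leafSet n) (hj : j ∈ leafSet n) (hcr : CrossoverAt N i j N') : RBPN n N' := by
  obtain ⟨u, v, c1, c2, d1, d2, Cn, rfl⟩ := hcr.exists_crossoverData hN hij hi hj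
  exact Cn.rbpn_crossover hN

lemma exists_crossoverAt {n i j : ℕ} {N : Dgraph} (hN : RBPN n N) (hi : i ∈ leafSet n)
    (hj : j ∈ leafSet n) : ∃ N', CrossoverAt N i j N' := by
  obtain ⟨u, hu⟩ := hN.exists_isTerminalArc hi
  obtain ⟨v, hv⟩ := hN.exists_isTerminalArc hj
  obtain ⟨a1, a2, b1, b2, hfresh, hnd⟩ := exists_fresh_gadget N.verts
  exact ⟨_, u, v, a1, a2, b1, b2, hu.mem, hv.mem, hfresh a1 (by simp), hfresh a2 (by simp),
    hfresh b1 (by simp), hfresh b2 (by simp), hnd, rfl⟩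

/-- The base tree `relabel (i j) T` of the new network is witnessed by the subdivision of
`relabel (i j) T'` along the crossover, with the old linking arcs `I` and the formerly straight
arcs `(a1, a2)`, `(b1, b2)` as linking arcs. -/
lemma CrossoverAt.isBaseTree_relabel_swap {n i j : ℕ} {N N' T : Dgraph} (hN : RBPN n N)
    (hij : i ≠ j) (hi : i ∈ leafSet n) (hj : j ∈ leafSet n) (hcr : CrossoverAt N i j N')
    (hT : RBPT n T) (hB : IsBaseTree n N T) : IsBaseTree n N' (relabel (Equiv.swap i j) T) := by
  obtain ⟨u, v, c1, c2, d1, d2, Cn, rfl⟩ := hcr.exists_crossoverData hN hij hi hj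
  obtain ⟨T', hTT', I, hI, hdisj, hA, hGN⟩ := hB
  have hleaf := hT.1.leafSet_subset
  have hTT'v := hTT'.verts_subset
  obtain ⟨p, hp⟩ := hTT'.exists_isTerminalArc hT.1.1 (hT.1.exists_isTerminalArc hi).choose_spec
  obtain ⟨q, hq⟩ := hTT'.exists_isTerminalArc hT.1.1 (hT.1.exists_isTerminalArc hj).choose_spec
  obtain ⟨a1, a2, b1, b2, hfresh, hnd⟩ := exists_fresh_gadget T'.verts
  have Ct : CrossoverData T' i j p q a1 a2 b1 b2 :=
    ⟨hTT'.wellFormed hT.1.1, hij, hp, hq, hfresh, hnd⟩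
  have hIij : ∀ a ∈ I, (a.1 ∈ T'.verts ∧ a.1 ≠ i ∧ a.1 ≠ j) ∧
      a.2 ∈ T'.verts ∧ a.2 ≠ i ∧ a.2 ≠ j := fun a ha => by
      have := hI a ha
      have := hleaf hi
      have := hleaf hj
      grind
  have Cg := Ct.union hIij
  have hX := Ct.union_crossover_eq
    ⟨fun h => (hIij _ h).2.2.1 rfl, fun h => (hIij _ h).2.2.2 rfl⟩
  have hσT : (relabel (Equiv.swap i j) T).verts = T.verts :=
    relabel_verts_of_forall _ fun x => by rw [Equiv.swap_apply_def]; grind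
  refine ⟨_, Relation.ReflTransGen.trans (subdivision_relabel _ hTT')
      Ct.relabel_swap.subdivision_crossover_sdiff, I ∪ {(a1, a2), (b1, b2)}, fun a ha => ?_,
    disjointArcs_union_gadget hdisj (fun a ha => ⟨(hI a ha).1, (hI a ha).2.2.1⟩) hfresh hnd,
    hX ▸ Cg.acyclic_crossover hA,
    hX ▸ Cg.homeomorphicL_crossover Cn hA hN.not_smoothable (hleaf.trans hTT'v) hi hj hGN⟩
  have hσT' : (relabel (Equiv.swap i j) T').verts = T'.verts :=
    relabel_verts_of_forall _ fun x => by rw [Equiv.swap_apply_def]; grind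
  rw [hσT, mem_crossover_verts, mem_crossover_verts, hσT']
  simp only [Finset.mem_union, Finset.mem_insert, Finset.mem_singleton] at ha
  have := hI a
  have := fun x hx => hfresh x hx ∘ @hTT'v x
  grind

end Crossover

end Dgraph

lemma Equiv.Perm.apply_mem_iff_of_forall_not_mem {s : Finset ℕ} {σ : Equiv.Perm ℕ}
    (h : ∀ x ∉ s, σ x = x) (x : ℕ) : σ x ∈ s ↔ x ∈ s := by
  by_cases hx : x ∈ s
  · exact iff_of_true (by_contra fun hσx => (σ.injective (h _ hσx) ▸ hσx) hx) hx
  · rw [h x hx]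

def adjSwaps (n : ℕ) : Set (Equiv.Perm ℕ) :=
  {σ | ∃ k, k ∈ leafSet n ∧ k + 1 ∈ leafSet n ∧ σ = Equiv.swap k (k + 1)}

lemma adjSwaps_mono {m n : ℕ} (hmn : m ≤ n) : adjSwaps m ⊆ adjSwaps n := by
  rintro _ ⟨k, hk, hk1, rfl⟩
  rw [mem_leafSet] at hk hk1
  exact ⟨k, mem_leafSet.2 (by omega), mem_leafSet.2 (by omega), rfl⟩

lemma swap_mem_closure_adjSwaps {n k m : ℕ} (hk : 1 ≤ k) (hkm : k ≤ m) (hm : m ≤ n) :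
    Equiv.swap k m ∈ Submonoid.closure (adjSwaps n) := by
  induction m, hkm using Nat.le_induction with
  | base => rw [Equiv.swap_self]; exact one_mem _
  | succ m hkm ih =>
    obtain rfl | hkm := hkm.eq_or_lt
    · exact Submonoid.subset_closure
        ⟨k, mem_leafSet.2 (by omega), mem_leafSet.2 (by omega), rfl⟩
    have hadj : Equiv.swap m (m + 1) ∈ Submonoid.closure (adjSwaps n) :=
      Submonoid.subset_closure ⟨m, mem_leafSet.2 (by omega), mem_leafSet.2 (by omega), rfl⟩
    rw [Equiv.swap_comm, ← Equiv.swap_mul_swap_mul_swap (y := m) hkm.ne (by omega)]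
    exact mul_mem (mul_mem hadj (ih (by omega))) hadj

lemma mem_closure_adjSwaps {n : ℕ} {π : Equiv.Perm ℕ} (hπ : ∀ x ∉ leafSet n, π x = x) :
    π ∈ Submonoid.closure (adjSwaps n) := by
  induction n generalizing π with
  | zero =>
    have : π = 1 := Equiv.ext fun x => hπ x (by rw [mem_leafSet]; omega)
    exact this ▸ one_mem _
  | succ n ih =>
    have hk := (Equiv.Perm.apply_mem_iff_of_forall_not_mem hπ (n + 1)).2
      (mem_leafSet.2 (by omega))
    rw [← Equiv.swap_mul_self_mul (π (n + 1)) (n + 1) π]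
    refine mul_mem (swap_mem_closure_adjSwaps (mem_leafSet.1 hk).1 (mem_leafSet.1 hk).2 le_rfl)
      (Submonoid.closure_mono (adjSwaps_mono n.le_succ) (ih fun x hx => ?_))
    rw [Equiv.Perm.mul_apply]
    by_cases hxn : x = n + 1
    · rw [hxn, Equiv.swap_apply_left]
    have hx' : x ∉ leafSet (n + 1) := by rw [mem_leafSet] at hx ⊢; omega
    rw [hπ x hx', Equiv.swap_apply_of_ne_of_ne (fun h : x = π (n + 1) => hx' (h ▸ hk)) hxn]

def AdjCrossRealises (n : ℕ) (π : Equiv.Perm ℕ) : Prop :=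
  ∀ N, TreeBased n N → ∃ N', Relation.ReflTransGen (AdjCrossStep n) N N' ∧
    TreeBased n N' ∧ ∀ T, RBPT n T → IsBaseTree n N T → IsBaseTree n N' (relabel π T)

def realisablePerms (n : ℕ) : Submonoid (Equiv.Perm ℕ) where
  carrier := {π | (∀ x, π x ∈ leafSet n ↔ x ∈ leafSet n) ∧ AdjCrossRealises n π}
  one_mem' := ⟨fun _ => Iff.rfl, fun N hN =>
    ⟨N, .refl, hN, fun T _ hB => by rwa [relabel_one]⟩⟩
  mul_mem' := by
    rintro σ τ ⟨hσ, hσN⟩ ⟨hτ, hτN⟩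
    refine ⟨fun x => (hσ _).trans (hτ x), fun N hN => ?_⟩
    obtain ⟨N₁, h₁, hN₁, hB₁⟩ := hτN N hN
    obtain ⟨N₂, h₂, hN₂, hB₂⟩ := hσN N₁ hN₁
    refine ⟨N₂, h₁.trans h₂, hN₂, fun T hT hB => ?_⟩
    rw [Equiv.Perm.coe_mul, ← relabel_relabel]
    exact hB₂ _ (rbpt_relabel τ hτ hT) (hB₁ T hT hB)

lemma adjSwaps_subset_realisablePerms (n : ℕ) : adjSwaps n ⊆ realisablePerms n := by
  rintro _ ⟨k, hk, hk1, rfl⟩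
  have hσ : ∀ x, Equiv.swap k (k + 1) x ∈ leafSet n ↔ x ∈ leafSet n := fun x => by
    rw [Equiv.swap_apply_def]; grind
  refine ⟨hσ, fun N ⟨hN, T₀, hT₀, hB₀⟩ => ?_⟩
  obtain ⟨N', hcr⟩ := exists_crossoverAt hN hk hk1
  have hbase : ∀ T, RBPT n T → IsBaseTree n N T →
      IsBaseTree n N' (relabel (Equiv.swap k (k + 1)) T) :=
    fun _ hT hB => hcr.isBaseTree_relabel_swap hN k.succ_ne_self.symm hk hk1 hT hB
  refine ⟨N', .single ⟨k, hk, hk1, hcr⟩, ⟨hcr.rbpn hN k.succ_ne_self.symm hk hk1, _,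
    rbpt_relabel _ hσ hT₀, hbase T₀ hT₀ hB₀⟩, hbase⟩

theorem adjacent_crossovers_realise_permutation_general
    (n : ℕ) (N : Dgraph) (hN : TreeBased n N)
    (π : Equiv.Perm ℕ) (hπ : ∀ x : ℕ, x ∉ leafSet n → π x = x) :
    ∃ N' : Dgraph, Relation.ReflTransGen (AdjCrossStep n) N N' ∧
      TreeBased n N' ∧
      ∀ T : Dgraph, RBPT n T → IsBaseTree n N T → IsBaseTree n N' (relabel π T) :=
  (Submonoid.closure_le.2 (adjSwaps_subset_realisablePerms n) (mem_closure_adjSwaps hπ)).2 N hN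

/-- For any tree-based network N on X = {1, …, n} and any permutation π of X, successively
adding finitely many crossovers between terminal arcs of adjacent leaves yields a tree-based
network N' such that, for every base tree T of N, the tree obtained from T by relabelling
each leaf x as π(x) is a base tree of N'. -/
theorem adjacent_crossovers_realise_permutation
    (n : ℕ) (hn : 1 < n) (N : Dgraph) (hN : TreeBased n N)
    (π : Equiv.Perm ℕ) (hπ : ∀ x : ℕ, x ∉ leafSet n → π x = x) :
    ∃ N' : Dgraph, Relation.ReflTransGen (AdjCrossStep n) N N' ∧
      TreeBased n N' ∧
      ∀ T : Dgraph, RBPT n T → IsBaseTree n N T → IsBaseTree n N' (relabel π T) :=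
  adjacent_crossovers_realise_permutation_general n N hN π hπ
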